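/- arXiv:2210.07195 — 2 statements merged into one kernel-verified Lean document; each statement's English description precedes it below -/
import Mathlib

section
/- Let $n \geq 1$, let $b \in GL_n(\mathbb{C})$ be an invertible upper triangular matrix, and let $\xi \in M_n(\mathbb{C})$ be upper triangular. Then $\operatorname{tr}((\xi + b\xi b^{-1})x) = 0$ for every upper triangular matrix $x \in M_n(\mathbb{C})$ if and only if $\xi$ is strictly upper triangular. (This is Lemma 1.1 of the paper --- for $\xi$ in the Borel subalgebra $\mathfrak{b}$, the tangent space $T_B$ lies in $\ker \sigma(\xi)$ if and only if $\xi \in \mathfrak{u}$ --- made explicit at a point $b$ of the Borel subgroup of $G = GL_n(\mathbb{C})$ with the trace form as invariant bilinear form.) -/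
/-!
For upper triangular matrices the diagonal of a product is the product of the diagonals, so
`tr (η x) = ∑ᵢ ηᵢᵢ xᵢᵢ` when `η` and `x` are upper triangular, and this vanishes for all such `x`
exactly when `η` has zero diagonal. Conjugation by an invertible upper triangular `b` preserves
the diagonal, so `η = ξ + b ξ b⁻¹` has diagonal `2 ξᵢᵢ`.
-/

open Finset

namespace Matrix

variable {m R : Type*} [Fintype m] [LinearOrder m]

theorem IsUpperTriangular.mul_apply_diag [NonUnitalNonAssocSemiring R] {A B : Matrix m m R}
    (hA : A.IsUpperTriangular) (hB : B.IsUpperTriangular) (i : m) :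
    (A * B) i i = A i i * B i i := by
  rw [mul_apply]
  refine sum_eq_single i (fun j _ hji => ?_) (by simp)
  rcases lt_or_gt_of_ne hji with h | h
  · rw [hA h, zero_mul]
  · rw [hB h, mul_zero]

theorem IsUpperTriangular.trace_mul [NonUnitalNonAssocSemiring R] {A B : Matrix m m R}
    (hA : A.IsUpperTriangular) (hB : B.IsUpperTriangular) :
    (A * B).trace = ∑ i, A i i * B i i :=
  sum_congr rfl fun i _ => hA.mul_apply_diag hB i

theorem IsUpperTriangular.forall_trace_mul_eq_zero_iff [NonAssocSemiring R] {η : Matrix m m R}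
    (hη : η.IsUpperTriangular) :
    (∀ x : Matrix m m R, x.IsUpperTriangular → (η * x).trace = 0) ↔ ∀ i, η i i = 0 := by
  refine ⟨fun h i => ?_, fun h x hx => ?_⟩
  · have hx : (single i i (1 : R)).IsUpperTriangular := blockTriangular_single le_rfl 1
    simpa [hη.trace_mul hx, single_apply] using h _ hx
  · simp [hη.trace_mul hx, h]

theorem IsUpperTriangular.inv [CommRing R] [DecidableEq m] {b : Matrix m m R} (hb : IsUnit b.det)
    (hbu : b.IsUpperTriangular) : b⁻¹.IsUpperTriangular := by
  have := b.invertibleOfIsUnitDet hb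
  exact blockTriangular_inv_of_blockTriangular hbu

theorem IsUpperTriangular.conj_apply_diag [CommRing R] [DecidableEq m] {b ξ : Matrix m m R}
    (hb : IsUnit b.det) (hbu : b.IsUpperTriangular) (hξ : ξ.IsUpperTriangular) (i : m) :
    (b * ξ * b⁻¹) i i = ξ i i := by
  have hbinv := hbu.inv hb
  have hdiag : b i i * b⁻¹ i i = 1 := by
    rw [← hbu.mul_apply_diag hbinv, mul_nonsing_inv b hb, one_apply_eq]
  rw [IsUpperTriangular.mul_apply_diag (hbu.mul hξ) hbinv, hbu.mul_apply_diag hξ]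
  linear_combination ξ i i * hdiag

end Matrix

theorem stmt_1_general (n : ℕ) (b : Matrix (Fin n) (Fin n) ℂ)
    (hb : IsUnit b.det) (hbu : ∀ i j : Fin n, j < i → b i j = 0)
    (ξ : Matrix (Fin n) (Fin n) ℂ) (hξ : ∀ i j : Fin n, j < i → ξ i j = 0) :
    (∀ x : Matrix (Fin n) (Fin n) ℂ, (∀ i j : Fin n, j < i → x i j = 0) →
      ((ξ + b * ξ * b⁻¹) * x).trace = 0) ↔
    (∀ i j : Fin n, j ≤ i → ξ i j = 0) := by
  have hbu : b.IsUpperTriangular := fun i j h => hbu i j h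
  have hξ : ξ.IsUpperTriangular := fun i j h => hξ i j h
  have hη : (ξ + b * ξ * b⁻¹).IsUpperTriangular := hξ.add ((hbu.mul hξ).mul (hbu.inv hb))
  have hηdiag (i : Fin n) : (ξ + b * ξ * b⁻¹) i i = 2 * ξ i i := by
    rw [Matrix.add_apply, hbu.conj_apply_diag hb hξ, two_mul]
  calc _ ↔ ∀ i, (ξ + b * ξ * b⁻¹) i i = 0 := hη.forall_trace_mul_eq_zero_iff
    _ ↔ ∀ i, ξ i i = 0 := by simp only [hηdiag, mul_eq_zero, two_ne_zero, false_or]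
    _ ↔ ∀ i j : Fin n, j ≤ i → ξ i j = 0 :=
      ⟨fun h i j hji => hji.lt_or_eq.elim (fun h' => hξ h') (· ▸ h i), fun h i => h i i le_rfl⟩

/-- Lemma 1.1 of the paper for `G = GL_n(ℂ)`: for `b` in the Borel subgroup `B` of
invertible upper triangular matrices and `ξ` in the Borel subalgebra `𝔟` of upper
triangular matrices, the tangent space `T_B` lies in `ker σ(ξ)` — i.e.
`tr((ξ + b ξ b⁻¹) x) = 0` for every upper triangular `x` — if and only if `ξ` lies
in the nilradical `𝔲` of strictly upper triangular matrices. -/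
theorem stmt_1 (n : ℕ) (hn : 1 ≤ n) (b : Matrix (Fin n) (Fin n) ℂ)
    (hb : IsUnit b.det) (hbu : ∀ i j : Fin n, j < i → b i j = 0)
    (ξ : Matrix (Fin n) (Fin n) ℂ) (hξ : ∀ i j : Fin n, j < i → ξ i j = 0) :
    (∀ x : Matrix (Fin n) (Fin n) ℂ, (∀ i j : Fin n, j < i → x i j = 0) →
      ((ξ + b * ξ * b⁻¹) * x).trace = 0) ↔
    (∀ i j : Fin n, j ≤ i → ξ i j = 0) :=
  stmt_1_general n b hb hbu ξ hξ
end

section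
/- Let $V$ and $W$ be finite-dimensional vector spaces over a field $K$, let $f : V \to W$ be a linear map, and let $L \subseteq W \times W^*$ be a Lagrangian subspace with respect to the canonical pairing. Then the pullback $f^*L = \{(X, f^*\alpha) \in V \times V^* \mid (f(X), \alpha) \in L\}$ is a Lagrangian subspace of $V \times V^*$ with respect to the canonical pairing. (This is the fiberwise linear-algebra content of the fact that the pullback of a Dirac structure, when smooth, is again a Dirac structure.) -/
/-!
Isotropy of `f^*L` comes from the identity `⟨(X, f^*α), (Y, f^*β)⟩ = ⟨(f X, α), (f Y, β)⟩`.
For coisotropy, let `(Y, β)` be orthogonal to `f^*L`. It suffices to find `α ∈ W*` with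
`f^*α = β` and `(f Y, α) ∈ L^⊥ = L`, i.e. a functional `α` on `W` with `α (f x + w) = β x - γ (f Y)`
for all `x ∈ V` and `(w, γ) ∈ L`. The right-hand side vanishes whenever `f x + w = 0`, because then
`(-x, f^*γ) ∈ f^*L`; so it descends to the image of `(x, (w, γ)) ↦ f x + w` and extends to all of `W`.
-/

/-- The canonical symmetric pairing `⟨(X, α), (Y, β)⟩ = α(Y) + β(X)` on `V × V*`. -/
noncomputable def canPairing (K V : Type*) [Field K] [AddCommGroup V] [Module K V] :
    LinearMap.BilinForm K (V × Module.Dual K V) :=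
  LinearMap.mk₂ K (fun p q => p.2 q.1 + q.2 p.1)
    (fun p p' q => by simp; ring)
    (fun c p q => by simp; ring)
    (fun p q q' => by simp; ring)
    (fun c p q => by simp; ring)

/-- The pullback `f^*L = {(X, f^*α) | (f(X), α) ∈ L} ⊆ V × V*` of a subspace
`L ⊆ W × W*` along a linear map `f : V → W`. -/
noncomputable def diracPullback {K V W : Type*} [Field K] [AddCommGroup V] [Module K V]
    [AddCommGroup W] [Module K W] (f : V →ₗ[K] W)
    (L : Submodule K (W × Module.Dual K W)) : Submodule K (V × Module.Dual K V) :=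
  Submodule.map (LinearMap.prodMap (LinearMap.id : V →ₗ[K] V) f.dualMap)
    (Submodule.comap (LinearMap.prodMap f (LinearMap.id : Module.Dual K W →ₗ[K] Module.Dual K W)) L)

open LinearMap

theorem LinearMap.exists_dual_comp_eq_of_ker_le {K M W : Type*} [Field K] [AddCommGroup M]
    [Module K M] [AddCommGroup W] [Module K W] (g : M →ₗ[K] W) (h : Module.Dual K M)
    (hker : LinearMap.ker g ≤ LinearMap.ker h) : ∃ α : Module.Dual K W, α ∘ₗ g = h := by
  suffices h ∈ range g.dualMap from this
  rw [range_dualMap_eq_dualAnnihilator_ker, Submodule.mem_dualAnnihilator]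
  exact fun x hx => hker hx

section Pullback

variable {K V W : Type*} [Field K] [AddCommGroup V] [Module K V] [AddCommGroup W] [Module K W]
  {f : V →ₗ[K] W} {L : Submodule K (W × Module.Dual K W)}

theorem canPairing_apply (p q : V × Module.Dual K V) : canPairing K V p q = p.2 q.1 + q.2 p.1 :=
  rfl

theorem canPairing_dualMap (x y : V) (α γ : Module.Dual K W) :
    canPairing K V (x, f.dualMap α) (y, f.dualMap γ) = canPairing K W (f x, α) (f y, γ) :=
  rfl

theorem mem_diracPullback_iff {p : V × Module.Dual K V} :
    p ∈ diracPullback f L ↔ ∃ α, (f p.1, α) ∈ L ∧ f.dualMap α = p.2 := by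
  constructor
  · rintro ⟨⟨x, α⟩, hα, rfl⟩
    exact ⟨α, hα, rfl⟩
  · rintro ⟨α, hα, hp⟩
    exact ⟨(p.1, α), hα, Prod.ext rfl hp⟩

theorem diracPullback_le_orthogonal (hL : L ≤ (canPairing K W).orthogonal L) :
    diracPullback f L ≤ (canPairing K V).orthogonal (diracPullback f L) := by
  intro p hp q hq
  obtain ⟨α, hα, hp⟩ := mem_diracPullback_iff.1 hp
  obtain ⟨γ, hγ, hq⟩ := mem_diracPullback_iff.1 hq
  rw [← Prod.mk.eta (p := p), ← Prod.mk.eta (p := q), ← hp, ← hq, canPairing_dualMap]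
  exact hL hα _ hγ

theorem orthogonal_diracPullback_le (hL : (canPairing K W).orthogonal L ≤ L) :
    (canPairing K V).orthogonal (diracPullback f L) ≤ diracPullback f L := by
  rintro ⟨Y, β⟩ hYβ
  let g : V × L →ₗ[K] W := f.coprod (fst K W _ ∘ₗ L.subtype)
  let h : Module.Dual K (V × L) :=
    β.coprod (-(Module.Dual.eval K W (f Y) ∘ₗ snd K W _ ∘ₗ L.subtype))
  have hker : LinearMap.ker g ≤ LinearMap.ker h := by
    rintro ⟨x, ⟨⟨w, γ⟩, hwγ⟩⟩ hx
    have hw : w = f (-x) := by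
      simpa [g, map_neg, eq_neg_iff_add_eq_zero, add_comm] using hx
    have hmem : (-x, f.dualMap γ) ∈ diracPullback f L :=
      mem_diracPullback_iff.2 ⟨γ, hw ▸ hwγ, rfl⟩
    have := hYβ _ hmem
    simp only [canPairing_apply, dualMap_apply, map_neg] at this
    simp only [mem_ker, h, coprod_apply, LinearMap.neg_apply, coe_comp, coe_snd,
      Submodule.coe_subtype, Function.comp_apply, Module.Dual.eval_apply]
    linear_combination -this
  obtain ⟨α, hα⟩ := exists_dual_comp_eq_of_ker_le (M := V × L) g h hker
  refine mem_diracPullback_iff.2 ⟨α, hL fun q hq => ?_, ?_⟩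
  · have := congr($hα (0, ⟨q, hq⟩))
    simp only [g, h, coe_comp, Function.comp_apply, coprod_apply, map_zero, coe_fst,
      Submodule.coe_subtype, zero_add, LinearMap.neg_apply, coe_snd, Module.Dual.eval_apply] at this
    rw [canPairing_apply]
    linear_combination this
  · ext x
    simpa [g, h] using congr($hα (x, 0))

end Pullback

theorem stmt_11_general (K V W : Type*) [Field K] [AddCommGroup V] [Module K V]
    [AddCommGroup W] [Module K W]
    (f : V →ₗ[K] W) (L : Submodule K (W × Module.Dual K W))
    (hL : L = (canPairing K W).orthogonal L) :
    diracPullback f L = (canPairing K V).orthogonal (diracPullback f L) :=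
  le_antisymm (diracPullback_le_orthogonal hL.le) (orthogonal_diracPullback_le hL.ge)

/-- The pullback of a Lagrangian subspace `L ⊆ W × W*` along a linear map
`f : V → W` is a Lagrangian subspace of `V × V*`: the fiberwise content of the fact
that the pullback of a Dirac structure is again a Dirac structure. -/
theorem stmt_11 (K V W : Type*) [Field K] [AddCommGroup V] [Module K V]
    [FiniteDimensional K V] [AddCommGroup W] [Module K W] [FiniteDimensional K W]
    (f : V →ₗ[K] W) (L : Submodule K (W × Module.Dual K W))
    (hL : L = (canPairing K W).orthogonal L) :
    diracPullback f L = (canPairing K V).orthogonal (diracPullback f L) :=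
  stmt_11_general K V W f L hL
end
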